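/- arXiv:2402.16277 — 2 statements merged into one kernel-verified Lean document; each statement's English description precedes it below -/
import Mathlib

section
/- Assume Setting (P) with 3 ≤ m < n/2. For x, y, z, s, w ∈ ℝⁿ define P₃(x,y,z,s,w) := ( |x−s|²|x−w|²|y−z|² − |x−y|²|x−z|²|s−w|² )² and P₂(x,y,z,s,w) := |x−y|^{n−2m+4}|x−z|^{n−2m+4}|x−s|^{n−2m+4}|x−w|^{n−2m+4}. Then for every x ∈ ℝⁿ: (1/2) ∫∫∫∫_{(ℝⁿ)⁴} P₃(x,y,z,s,w)/P₂(x,y,z,s,w) dμ(y)dμ(z)dμ(s)dμ(w) = u(x)² A₃(x) − A(u)(x)². -/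
open MeasureTheory Metric Filter
open scoped RealInnerProductSpace

/-- The Euclidean Laplacian of `f : ℝⁿ → ℝ`. -/
noncomputable def lap {n : ℕ} (f : EuclideanSpace ℝ (Fin n) → ℝ) :
    EuclideanSpace ℝ (Fin n) → ℝ :=
  fun x => ∑ i : Fin n,
    iteratedFDeriv ℝ 2 f x ![EuclideanSpace.single i 1, EuclideanSpace.single i 1]

/-- The Riesz potential `u(x) = ∫ |x-y|^{2m-n} dμ(y)`. -/
noncomputable def pu (n m : ℕ) (μ : Measure (EuclideanSpace ℝ (Fin n))) :
    EuclideanSpace ℝ (Fin n) → ℝ :=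
  fun x => ∫ y, ‖x - y‖ ^ (2 * (m : ℝ) - n) ∂μ

/-- `A(u)(x) = ∬ |y-z|² |x-y|^{2m-n-2} |x-z|^{2m-n-2} dμ(y)dμ(z)`. -/
noncomputable def Au (n m : ℕ) (μ : Measure (EuclideanSpace ℝ (Fin n))) :
    EuclideanSpace ℝ (Fin n) → ℝ :=
  fun x => ∫ q : EuclideanSpace ℝ (Fin n) × EuclideanSpace ℝ (Fin n),
    ‖q.1 - q.2‖ ^ 2 * ‖x - q.1‖ ^ (2 * (m : ℝ) - n - 2) * ‖x - q.2‖ ^ (2 * (m : ℝ) - n - 2)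
    ∂(μ.prod μ)

/-- `A₁(x) = ∬ |y-z|²(|x-y|²+|x-z|²) |x-y|^{2m-n-4} |x-z|^{2m-n-4} dμ(y)dμ(z)`. -/
noncomputable def A1 (n m : ℕ) (μ : Measure (EuclideanSpace ℝ (Fin n))) :
    EuclideanSpace ℝ (Fin n) → ℝ :=
  fun x => ∫ q : EuclideanSpace ℝ (Fin n) × EuclideanSpace ℝ (Fin n),
    ‖q.1 - q.2‖ ^ 2 * (‖x - q.1‖ ^ 2 + ‖x - q.2‖ ^ 2)
      * ‖x - q.1‖ ^ (2 * (m : ℝ) - n - 4) * ‖x - q.2‖ ^ (2 * (m : ℝ) - n - 4)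
    ∂(μ.prod μ)

/-- `A₂(x) = ∭ |y-z|²(|x-z|²|y-s|² + |x-y|²|z-s|²)
|x-y|^{2m-n-4} |x-z|^{2m-n-4} |x-s|^{2m-n-2} dμ(y)dμ(z)dμ(s)`. -/
noncomputable def A2 (n m : ℕ) (μ : Measure (EuclideanSpace ℝ (Fin n))) :
    EuclideanSpace ℝ (Fin n) → ℝ :=
  fun x => ∫ q : EuclideanSpace ℝ (Fin n) × EuclideanSpace ℝ (Fin n) × EuclideanSpace ℝ (Fin n),
    ‖q.1 - q.2.1‖ ^ 2
      * (‖x - q.2.1‖ ^ 2 * ‖q.1 - q.2.2‖ ^ 2 + ‖x - q.1‖ ^ 2 * ‖q.2.1 - q.2.2‖ ^ 2)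
      * ‖x - q.1‖ ^ (2 * (m : ℝ) - n - 4) * ‖x - q.2.1‖ ^ (2 * (m : ℝ) - n - 4)
      * ‖x - q.2.2‖ ^ (2 * (m : ℝ) - n - 2)
    ∂(μ.prod (μ.prod μ))

/-- `A₃(x) = ∬ |y-z|⁴ |x-y|^{2m-n-4} |x-z|^{2m-n-4} dμ(y)dμ(z)`. -/
noncomputable def A3 (n m : ℕ) (μ : Measure (EuclideanSpace ℝ (Fin n))) :
    EuclideanSpace ℝ (Fin n) → ℝ :=
  fun x => ∫ q : EuclideanSpace ℝ (Fin n) × EuclideanSpace ℝ (Fin n),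
    ‖q.1 - q.2‖ ^ 4 * ‖x - q.1‖ ^ (2 * (m : ℝ) - n - 4) * ‖x - q.2‖ ^ (2 * (m : ℝ) - n - 4)
    ∂(μ.prod μ)

/-! Expanding the square, `P₃/P₂` is
`K₄(y,z) K₀(s,w) + K₀(y,z) K₄(s,w) - 2 K₂(y,z) K₂(s,w)` with
`Kₖ(y,z) = |y-z|^k |x-y|^(2m-n-k) |x-z|^(2m-n-k)`, so by Fubini the quadruple integral is
`2 (∫K₄ ∫K₀ - (∫K₂)²)`, and `∫K₀ = u(x)²`, `∫K₂ = A(u)(x)`, `∫K₄ = A₃(x)`.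
Each `Kₖ` is integrable for `μ ⊗ μ` because `|y-z|^k ≤ 2^k (|x-y|^k + |x-z|^k)` dominates it by
products of the integrable Riesz factors; these factors also make `μ` σ-finite. -/

theorem MeasureTheory.sigmaFinite_of_integrable_pos {α : Type*} [MeasurableSpace α]
    {μ : Measure α} {f : α → ℝ} (hf : Integrable f μ) (hpos : ∀ a, 0 < f a) :
    SigmaFinite μ := by
  refine ⟨⟨⟨fun k => {a | 1 / ((k : ℝ) + 1) ≤ f a}, fun _ => trivial,
    fun k => hf.measure_ge_lt_top (by positivity), ?_⟩⟩⟩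
  refine Set.eq_univ_of_forall fun a => Set.mem_iUnion.2 ?_
  obtain ⟨k, hk⟩ := exists_nat_one_div_lt (hpos a)
  exact ⟨k, hk.le⟩

theorem Real.sq_sub_div_rpow_eq {α b c d e t t' : ℝ} (hα : α < 0)
    (hb : 0 ≤ b) (hc : 0 ≤ c) (hd : 0 ≤ d) (he : 0 ≤ e) :
    (d ^ 2 * e ^ 2 * t ^ 2 - b ^ 2 * c ^ 2 * t' ^ 2) ^ 2
        / (b ^ (4 - α) * c ^ (4 - α) * d ^ (4 - α) * e ^ (4 - α))
      = t ^ 4 * b ^ (α - 4) * c ^ (α - 4) * (d ^ α * e ^ α)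
        + b ^ α * c ^ α * (t' ^ 4 * d ^ (α - 4) * e ^ (α - 4))
        - 2 * (t ^ 2 * b ^ (α - 2) * c ^ (α - 2) * (t' ^ 2 * d ^ (α - 2) * e ^ (α - 2))) := by
  -- `0 ^ r = 0` for `r ≠ 0`, so both sides vanish as soon as one of `b, c, d, e` does
  by_cases h0 : b = 0 ∨ c = 0 ∨ d = 0 ∨ e = 0
  · have h4 : 4 - α ≠ 0 := by linarith
    have h4' : α - 4 ≠ 0 := by linarith
    have h2 : α - 2 ≠ 0 := by linarith
    rcases h0 with rfl | rfl | rfl | rfl <;>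
      simp [Real.zero_rpow, h4, h4', h2, hα.ne]
  simp only [not_or] at h0
  obtain ⟨hb, hc, hd, he⟩ : 0 < b ∧ 0 < c ∧ 0 < d ∧ 0 < e :=
    ⟨hb.lt_of_ne' h0.1, hc.lt_of_ne' h0.2.1, hd.lt_of_ne' h0.2.2.1, he.lt_of_ne' h0.2.2.2⟩
  simp only [Real.rpow_sub hb, Real.rpow_sub hc, Real.rpow_sub hd, Real.rpow_sub he,
    Real.rpow_ofNat]
  have := Real.rpow_pos_of_pos hb α
  have := Real.rpow_pos_of_pos hc α
  have := Real.rpow_pos_of_pos hd α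
  have := Real.rpow_pos_of_pos he α
  field_simp
  ring

theorem MeasureTheory.integral_prod_prod_mul_add_mul_sub_two_mul {β : Type*}
    [MeasurableSpace β] {ν : Measure β} [SFinite ν] {f g h : β × β → ℝ}
    (hf : Integrable f (ν.prod ν)) (hg : Integrable g (ν.prod ν)) (hh : Integrable h (ν.prod ν)) :
    ∫ q, f (q.1, q.2.1) * g (q.2.2.1, q.2.2.2) + g (q.1, q.2.1) * f (q.2.2.1, q.2.2.2)
        - 2 * (h (q.1, q.2.1) * h (q.2.2.1, q.2.2.2)) ∂(ν.prod (ν.prod (ν.prod ν)))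
      = 2 * ((∫ p, f p ∂(ν.prod ν)) * (∫ p, g p ∂(ν.prod ν)) - (∫ p, h p ∂(ν.prod ν)) ^ 2) := by
  rw [← (measurePreserving_prodAssoc ν ν (ν.prod ν)).integral_comp'
    (g := fun q : β × β × β × β => f (q.1, q.2.1) * g (q.2.2.1, q.2.2.2)
      + g (q.1, q.2.1) * f (q.2.2.1, q.2.2.2) - 2 * (h (q.1, q.2.1) * h (q.2.2.1, q.2.2.2)))]
  simp only [MeasurableEquiv.prodAssoc, MeasurableEquiv.coe_mk, Equiv.prodAssoc_apply,
    Prod.mk.eta]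
  rw [integral_sub, integral_add, integral_const_mul, integral_prod_mul, integral_prod_mul,
    integral_prod_mul]
  · ring
  all_goals fun_prop

section RieszKernel

variable {E : Type*} [NormedAddCommGroup E]

noncomputable def pairKernel (x : E) (k : ℕ) (a : ℝ) (q : E × E) : ℝ :=
  ‖q.1 - q.2‖ ^ k * ‖x - q.1‖ ^ a * ‖x - q.2‖ ^ a

theorem pairKernel_le (x : E) (k : ℕ) (α : ℝ) (q : E × E) :
    pairKernel x k (α - k) q ≤ 2 ^ k * (‖x - q.1‖ ^ α * ‖x - q.2‖ ^ (α - k)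
      + ‖x - q.1‖ ^ (α - k) * ‖x - q.2‖ ^ α) := by
  set b := ‖x - q.1‖
  set c := ‖x - q.2‖
  have hmerge : ∀ r : ℝ, 0 ≤ r → r ^ k * r ^ (α - k) ≤ r ^ α := fun r hr => by
    simpa [← Real.rpow_natCast] using Real.le_rpow_add hr k (α - k)
  have htri : ‖q.1 - q.2‖ ≤ b + c := by
    simpa [b, c, norm_sub_rev x q.1] using norm_sub_le_norm_sub_add_norm_sub q.1 x q.2
  have hpow : ‖q.1 - q.2‖ ^ k ≤ 2 ^ k * (b ^ k + c ^ k) := calc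
    ‖q.1 - q.2‖ ^ k ≤ (b + c) ^ k := by gcongr
    _ ≤ 2 ^ (k - 1) * (b ^ k + c ^ k) := add_pow_le (by positivity) (by positivity) k
    _ ≤ 2 ^ k * (b ^ k + c ^ k) := by gcongr; exacts [one_le_two, k.sub_le 1]
  have hb := hmerge b (norm_nonneg _)
  have hc := hmerge c (norm_nonneg _)
  calc pairKernel x k (α - k) q ≤ 2 ^ k * (b ^ k + c ^ k) * b ^ (α - k) * c ^ (α - k) := by
        unfold pairKernel; gcongr
    _ = 2 ^ k * ((b ^ k * b ^ (α - k)) * c ^ (α - k) + b ^ (α - k) * (c ^ k * c ^ (α - k))) := by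
        ring
    _ ≤ _ := by gcongr

theorem sq_sub_div_rpow_eq_pairKernel {α : ℝ} (hα : α < 0) (x y z s w : E) :
    (‖x - s‖ ^ 2 * ‖x - w‖ ^ 2 * ‖y - z‖ ^ 2 - ‖x - y‖ ^ 2 * ‖x - z‖ ^ 2 * ‖s - w‖ ^ 2) ^ 2
        / (‖x - y‖ ^ (4 - α) * ‖x - z‖ ^ (4 - α) * ‖x - s‖ ^ (4 - α) * ‖x - w‖ ^ (4 - α))
      = pairKernel x 4 (α - 4) (y, z) * pairKernel x 0 α (s, w)
        + pairKernel x 0 α (y, z) * pairKernel x 4 (α - 4) (s, w)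
        - 2 * (pairKernel x 2 (α - 2) (y, z) * pairKernel x 2 (α - 2) (s, w)) := by
  simp only [pairKernel, pow_zero, one_mul]
  exact Real.sq_sub_div_rpow_eq hα (norm_nonneg _) (norm_nonneg _) (norm_nonneg _)
    (norm_nonneg _)

variable [MeasurableSpace E] {μ : Measure E}

theorem sigmaFinite_of_integrable_norm_sub_rpow [Nontrivial E] {α : ℝ}
    (h : ∀ x, Integrable (fun y => ‖x - y‖ ^ α) μ) : SigmaFinite μ := by
  obtain ⟨x₁, x₂, hx⟩ := exists_pair_ne E
  -- `‖x - y‖ ^ α > 0` for `y ≠ x`, so the sum over two distinct centres is positive everywhere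
  refine sigmaFinite_of_integrable_pos ((h x₁).add (h x₂)) fun y => ?_
  rcases eq_or_ne y x₁ with rfl | hy
  · exact add_pos_of_nonneg_of_pos (by positivity)
      (Real.rpow_pos_of_pos (norm_pos_iff.2 (sub_ne_zero.2 hx.symm)) _)
  · exact add_pos_of_pos_of_nonneg
      (Real.rpow_pos_of_pos (norm_pos_iff.2 (sub_ne_zero.2 hy.symm)) _) (by positivity)

theorem integral_pairKernel_zero [SFinite μ] (x : E) (α : ℝ) :
    ∫ q, pairKernel x 0 α q ∂(μ.prod μ) = (∫ y, ‖x - y‖ ^ α ∂μ) ^ 2 := by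
  simpa [pairKernel, sq] using integral_prod_mul (μ := μ) (ν := μ)
    (fun y => ‖x - y‖ ^ α) (fun y => ‖x - y‖ ^ α)

theorem integrable_pairKernel [BorelSpace E] [SecondCountableTopology E] {x : E} (k : ℕ)
    {α : ℝ} (hα : Integrable (fun y => ‖x - y‖ ^ α) μ)
    (hαk : Integrable (fun y => ‖x - y‖ ^ (α - k)) μ) :
    Integrable (pairKernel x k (α - k)) (μ.prod μ) := by
  refine (((hα.mul_prod hαk).add (hαk.mul_prod hα)).const_mul (2 ^ k)).mono' ?_
    (Eventually.of_forall fun q => ?_)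
  · exact ((((measurable_fst.sub measurable_snd).norm.pow_const k).mul
      ((measurable_const.sub measurable_fst).norm.pow_const _)).mul
      ((measurable_const.sub measurable_snd).norm.pow_const _)).aestronglyMeasurable
  · rw [Real.norm_of_nonneg (by unfold pairKernel; positivity)]
    exact pairKernel_le x k α q

end RieszKernel

theorem quadruple_integral_P3_general
    (n m : ℕ) (hmn : 2 * m < n)
    (μ : Measure (EuclideanSpace ℝ (Fin n)))
    (hμ : ∀ (x : EuclideanSpace ℝ (Fin n)) (k : ℕ), k ≤ 4 →
      Integrable (fun y => ‖x - y‖ ^ (2 * (m : ℝ) - n - k)) μ) :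
    ∀ x : EuclideanSpace ℝ (Fin n),
      let P₃ : EuclideanSpace ℝ (Fin n) → EuclideanSpace ℝ (Fin n) →
          EuclideanSpace ℝ (Fin n) → EuclideanSpace ℝ (Fin n) → ℝ :=
        fun y z s w =>
          (‖x - s‖ ^ 2 * ‖x - w‖ ^ 2 * ‖y - z‖ ^ 2
            - ‖x - y‖ ^ 2 * ‖x - z‖ ^ 2 * ‖s - w‖ ^ 2) ^ 2
      let P₂ : EuclideanSpace ℝ (Fin n) → EuclideanSpace ℝ (Fin n) →
          EuclideanSpace ℝ (Fin n) → EuclideanSpace ℝ (Fin n) → ℝ :=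
        fun y z s w => ‖x - y‖ ^ ((n : ℝ) - 2 * m + 4) * ‖x - z‖ ^ ((n : ℝ) - 2 * m + 4)
          * ‖x - s‖ ^ ((n : ℝ) - 2 * m + 4) * ‖x - w‖ ^ ((n : ℝ) - 2 * m + 4)
      (1 / 2 : ℝ) * (∫ q : EuclideanSpace ℝ (Fin n) × EuclideanSpace ℝ (Fin n) ×
            EuclideanSpace ℝ (Fin n) × EuclideanSpace ℝ (Fin n),
          P₃ q.1 q.2.1 q.2.2.1 q.2.2.2 / P₂ q.1 q.2.1 q.2.2.1 q.2.2.2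
          ∂(μ.prod (μ.prod (μ.prod μ))))
        = pu n m μ x ^ 2 * A3 n m μ x - Au n m μ x ^ 2 := by
  intro x
  set α : ℝ := 2 * m - n with hα_def
  have hα : α < 0 := by rw [hα_def, sub_neg]; exact_mod_cast hmn
  have h0 : ∀ x, Integrable (fun y => ‖x - y‖ ^ α) μ := fun x => by
    simpa using hμ x 0 (Nat.zero_le 4)
  have : NeZero n := ⟨by omega⟩
  have : SigmaFinite μ := sigmaFinite_of_integrable_norm_sub_rpow h0
  have hK : ∀ k ≤ 4, Integrable (pairKernel x k (α - k)) (μ.prod μ) := fun k hk =>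
    integrable_pairKernel k (h0 x) (hμ x k hk)
  have hK4 : Integrable (pairKernel x 4 (α - 4)) (μ.prod μ) := by simpa using hK 4 le_rfl
  have hK2 : Integrable (pairKernel x 2 (α - 2)) (μ.prod μ) := by simpa using hK 2 (by norm_num)
  have hK0 : Integrable (pairKernel x 0 α) (μ.prod μ) := by simpa using hK 0 (by norm_num)
  simp only [show (n : ℝ) - 2 * m + 4 = 4 - α by ring, sq_sub_div_rpow_eq_pairKernel hα]
  rw [integral_prod_prod_mul_add_mul_sub_two_mul hK4 hK0 hK2, integral_pairKernel_zero]
  change 1 / 2 * (2 * (A3 n m μ x * pu n m μ x ^ 2 - Au n m μ x ^ 2)) = _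
  ring

/-- `(1/2) ∬∬ P₃/P₂ dμ⁴ = u²A₃ - A(u)²`. -/
theorem quadruple_integral_P3
    (n m : ℕ) (hmn : 2 * m < n)
    (μ : Measure (EuclideanSpace ℝ (Fin n)))
    (hμ : ∀ (x : EuclideanSpace ℝ (Fin n)) (k : ℕ), k ≤ 4 →
      Integrable (fun y => ‖x - y‖ ^ (2 * (m : ℝ) - n - k)) μ)
    (hm : 3 ≤ m) :
    ∀ x : EuclideanSpace ℝ (Fin n),
      let P₃ : EuclideanSpace ℝ (Fin n) → EuclideanSpace ℝ (Fin n) →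
          EuclideanSpace ℝ (Fin n) → EuclideanSpace ℝ (Fin n) → ℝ :=
        fun y z s w =>
          (‖x - s‖ ^ 2 * ‖x - w‖ ^ 2 * ‖y - z‖ ^ 2
            - ‖x - y‖ ^ 2 * ‖x - z‖ ^ 2 * ‖s - w‖ ^ 2) ^ 2
      let P₂ : EuclideanSpace ℝ (Fin n) → EuclideanSpace ℝ (Fin n) →
          EuclideanSpace ℝ (Fin n) → EuclideanSpace ℝ (Fin n) → ℝ :=
        fun y z s w => ‖x - y‖ ^ ((n : ℝ) - 2 * m + 4) * ‖x - z‖ ^ ((n : ℝ) - 2 * m + 4)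
          * ‖x - s‖ ^ ((n : ℝ) - 2 * m + 4) * ‖x - w‖ ^ ((n : ℝ) - 2 * m + 4)
      (1 / 2 : ℝ) * (∫ q : EuclideanSpace ℝ (Fin n) × EuclideanSpace ℝ (Fin n) ×
            EuclideanSpace ℝ (Fin n) × EuclideanSpace ℝ (Fin n),
          P₃ q.1 q.2.1 q.2.2.1 q.2.2.2 / P₂ q.1 q.2.1 q.2.2.1 q.2.2.2
          ∂(μ.prod (μ.prod (μ.prod μ))))
        = pu n m μ x ^ 2 * A3 n m μ x - Au n m μ x ^ 2 :=
  quadruple_integral_P3_general n m hmn μ hμ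
end

section
/- Let m ≥ 3 be an integer and let l be a real number with l > 2. Let a, b, c be real numbers satisfying 0 ≤ a ≤ c, 0 ≤ b ≤ a + c, and c > 0. Then (2m−2−l)(m−l) a + l(2m−2−l) b + l² c > 0. -/
/-- The algebraic positivity inequality underlying the final step of the proof that the
fourth-order Q-curvature is positive: for `m ≥ 3`, `l > 2`, and `a, b, c` with
`0 ≤ a ≤ c`, `0 ≤ b ≤ a + c`, `c > 0`, one has
`(2m-2-l)(m-l)a + l(2m-2-l)b + l²c > 0`. -/
theorem algebraic_positivity
    (m : ℕ) (hm : 3 ≤ m) (l : ℝ) (hl : 2 < l)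
    (a b c : ℝ) (ha0 : 0 ≤ a) (hac : a ≤ c) (hb0 : 0 ≤ b) (hbac : b ≤ a + c)
    (hc : 0 < c) :
    0 < (2 * (m : ℝ) - 2 - l) * ((m : ℝ) - l) * a + l * (2 * (m : ℝ) - 2 - l) * b
        + l ^ 2 * c := by
  have hM : (3 : ℝ) ≤ (m : ℝ) := by exact_mod_cast hm
  have hl0 : (0 : ℝ) ≤ l := by linarith
  rcases le_or_gt (2 * (m : ℝ) - 2 - l) 0 with hp | hp
  · -- p ≤ 0: use b ≤ a + c and a ≤ c; remainder is (2M²+Ml-2M-2l)c > 0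
    nlinarith [mul_nonneg (mul_nonneg (sub_nonneg.2 hbac) hl0) (neg_nonneg.2 hp),
      mul_nonneg (mul_nonneg (sub_nonneg.2 hac) (by linarith : (0:ℝ) ≤ (m:ℝ))) (neg_nonneg.2 hp),
      mul_nonneg (mul_nonneg hl0 (by linarith : (0:ℝ) ≤ (m:ℝ) - 2)) hc.le,
      mul_nonneg (mul_nonneg (by linarith : (0:ℝ) ≤ (m:ℝ) - 3) (by linarith : (0:ℝ) ≤ 2*(m:ℝ) + 4)) hc.le]
  · rcases le_or_gt ((m : ℝ) - l) 0 with hq | hq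
    · -- p > 0, q ≤ 0: remainder is (2(l-M)² + (M+2)(l-M) + M²)c > 0
      nlinarith [mul_nonneg (mul_nonneg hl0 hp.le) hb0,
        mul_nonneg (mul_nonneg (sub_nonneg.2 hac) hp.le) (neg_nonneg.2 hq),
        mul_nonneg (sq_nonneg (l - (m:ℝ))) hc.le,
        mul_nonneg (mul_nonneg (by linarith : (0:ℝ) ≤ (m:ℝ) + 2) (by linarith : (0:ℝ) ≤ l - (m:ℝ))) hc.le,
        mul_nonneg (mul_nonneg (by linarith : (0:ℝ) ≤ (m:ℝ) - 3) (by linarith : (0:ℝ) ≤ (m:ℝ) + 3)) hc.le]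
    · -- all coefficients nonnegative
      nlinarith [mul_nonneg (mul_nonneg hp.le hq.le) ha0,
        mul_nonneg (mul_nonneg hl0 hp.le) hb0,
        mul_pos (mul_pos (lt_trans two_pos hl) (lt_trans two_pos hl)) hc]
end
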